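/- Let Γ be a group, γ ∈ Γ, and let f : Γ → ℂ be a bounded function such that the function x ↦ f(γ·x) − f(x) tends to 0 along the cofinite filter on Γ. Then the commutator u_γ ∘ M_f − M_f ∘ u_γ is a compact operator on ℓ²(Γ). (This is the left-translation analogue, obtained in the proof of the paper's Lemma 21(2) by conjugating by the unitary induced from inversion on the group.) -/

import Mathlib

/-!
On the basis, the commutator acts by `e_x ↦ (f x - f (γ x)) e_{γ x}`, so it equals `u_γ ∘ M_k`
with `k x = f x - f (γ x)`. A multiplication operator whose symbol tends to `0` along the cofinite
filter is the norm limit of the finite-rank operators `M_k ∘ P_s`, where `P_s` is the coordinate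
projection onto a finite set `s`; hence it is compact.
-/

open Filter Topology
open scoped ENNReal

theorem memℓp_infty_of_tendsto_cofinite {α E : Type*} [NormedAddCommGroup E] {g : α → E}
    (hg : Tendsto g cofinite (𝓝 0)) : Memℓp g ∞ :=
  memℓp_infty <| by simpa using hg.norm.bddAbove_range_of_cofinite

namespace lp

section NormedField

variable {α 𝕜 : Type*} [NormedField 𝕜] {p : ℝ≥0∞}

theorem apply_single_of_forall_apply_eq_mul [DecidableEq α]
    {M : lp (fun _ : α => 𝕜) p → lp (fun _ : α => 𝕜) p} {g : α → 𝕜}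
    (hM : ∀ ξ i, M ξ i = g i * ξ i) (j : α) (c : 𝕜) :
    M (lp.single p j c) = lp.single p j (g j * c) := by
  ext i
  rw [hM, lp.single_apply, lp.single_apply, Pi.single_apply, Pi.single_apply]
  split_ifs with h
  · subst h; rfl
  · exact mul_zero _

theorem norm_mul_apply_le (g : lp (fun _ : α => 𝕜) ∞) (ξ : α → 𝕜) (i : α) :
    ‖g i * ξ i‖ ≤ ‖g‖ * ‖ξ i‖ := by
  rw [norm_mul]; gcongr; exact norm_apply_le_norm ENNReal.top_ne_zero g i

variable [Fact (1 ≤ p)]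

theorem norm_le_mul_of_forall_norm_apply_le {x y : lp (fun _ : α => 𝕜) p} {C : ℝ} (hC : 0 ≤ C)
    (h : ∀ i, ‖x i‖ ≤ C * ‖y i‖) : ‖x‖ ≤ C * ‖y‖ :=
  calc ‖x‖ ≤ ‖C • toNorm y‖ := norm_mono (zero_lt_one.trans_le Fact.out).ne' fun i => by
        simpa [abs_of_nonneg hC] using h i
    _ = C * ‖y‖ := by rw [norm_smul, norm_toNorm, Real.norm_of_nonneg hC]

variable (p) in
noncomputable def mulCLM (g : lp (fun _ : α => 𝕜) ∞) :
    lp (fun _ : α => 𝕜) p →L[𝕜] lp (fun _ : α => 𝕜) p :=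
  LinearMap.mkContinuous
    { toFun := fun ξ => ⟨fun i => g i * ξ i,
        ((lp.memℓp ξ).norm.const_mul ‖g‖).mono (norm_mul_apply_le g ξ)⟩
      map_add' := fun ξ η => by ext i; exact mul_add _ _ _
      map_smul' := fun c ξ => by ext i; simp [mul_left_comm] }
    ‖g‖ fun ξ => norm_le_mul_of_forall_norm_apply_le (norm_nonneg g) (norm_mul_apply_le g ξ)

@[simp]
theorem mulCLM_apply (g : lp (fun _ : α => 𝕜) ∞) (ξ : lp (fun _ : α => 𝕜) p) (i : α) :
    mulCLM p g ξ i = g i * ξ i :=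
  rfl

variable [DecidableEq α]

theorem ext_single_one {F : Type*} [AddCommMonoid F] [Module 𝕜 F] [TopologicalSpace F]
    [T2Space F] (hp : p ≠ ⊤) {S T : lp (fun _ : α => 𝕜) p →L[𝕜] F}
    (h : ∀ i, S (lp.single p i 1) = T (lp.single p i 1)) : S = T :=
  ext_continuousLinearMap hp fun i => ContinuousLinearMap.ext_ring (h i)

variable (p) in
noncomputable def finsetProjCLM (s : Finset α) :
    lp (fun _ : α => 𝕜) p →L[𝕜] lp (fun _ : α => 𝕜) p :=
  ∑ i ∈ s, (singleContinuousLinearMap 𝕜 (fun _ : α => 𝕜) p i).comp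
    (evalCLM 𝕜 (fun _ : α => 𝕜) p i)

theorem finsetProjCLM_apply (s : Finset α) (ξ : lp (fun _ : α => 𝕜) p) (i : α) :
    finsetProjCLM p s ξ i = if i ∈ s then ξ i else 0 := by
  rw [finsetProjCLM, _root_.sum_apply, coeFn_sum, Finset.sum_apply]
  simp only [ContinuousLinearMap.comp_apply, singleContinuousLinearMap_apply, lp.single_apply,
    Pi.single_apply, Finset.sum_ite_eq]
  rfl

end NormedField

section Compact

variable {α 𝕜 : Type*} [NontriviallyNormedField 𝕜] [ProperSpace 𝕜] {p : ℝ≥0∞} [Fact (1 ≤ p)]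

theorem isCompactOperator_finsetProjCLM [DecidableEq α] (s : Finset α) :
    IsCompactOperator (finsetProjCLM p s : lp (fun _ : α => 𝕜) p →L[𝕜] _) :=
  Submodule.sum_mem (compactOperator _ _ _) fun i _ =>
    ((isCompactOperator_of_locallyCompactSpace_dom (evalCLM 𝕜 (fun _ : α => 𝕜) p i)).clm_comp
      (singleContinuousLinearMap 𝕜 (fun _ : α => 𝕜) p i) :)

theorem isCompactOperator_mulCLM_of_tendsto_cofinite (g : lp (fun _ : α => 𝕜) ∞)
    (hg : Tendsto (g : α → 𝕜) cofinite (𝓝 0)) : IsCompactOperator (mulCLM p g) := by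
  classical
  refine isCompactOperator_of_tendsto (l := atTop)
    (F := fun s => (mulCLM p g).comp (finsetProjCLM p s)) ?_
    (Eventually.of_forall fun s => ((isCompactOperator_finsetProjCLM s).clm_comp (mulCLM p g) :))
  refine Metric.tendsto_nhds.2 fun ε hε => ?_
  have hfin : {i | g i ∉ Metric.ball 0 (ε / 2)}.Finite :=
    hg (Metric.ball_mem_nhds 0 (by positivity))
  refine eventually_atTop.2 ⟨hfin.toFinset, fun s hs => ?_⟩
  rw [dist_eq_norm]
  refine lt_of_le_of_lt (ContinuousLinearMap.opNorm_le_bound _ (by positivity) fun ξ =>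
    norm_le_mul_of_forall_norm_apply_le (by positivity) fun i => ?_) (half_lt_self hε)
  by_cases hi : i ∈ s
  · simp only [sub_apply, ContinuousLinearMap.comp_apply, AddSubgroupClass.coe_sub,
      PreLp.sub_apply, mulCLM_apply, finsetProjCLM_apply, hi, ↓reduceIte, sub_self,
      _root_.norm_zero]
    positivity
  · have hgi : ‖g i‖ < ε / 2 := by simpa using fun h => hi (hs (hfin.mem_toFinset.2 h))
    simp only [sub_apply, ContinuousLinearMap.comp_apply, AddSubgroupClass.coe_sub,
      PreLp.sub_apply, mulCLM_apply, finsetProjCLM_apply, hi, ↓reduceIte, mul_zero, zero_sub,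
      _root_.norm_neg, norm_mul]
    gcongr

end Compact

end lp

theorem commutator_left_translation_mult_compact_of_cofinite_general
    {Γ : Type*} [Group Γ] [DecidableEq Γ]
    (γ : Γ) (f : Γ → ℂ)
    (hf : ∀ ε : ℝ, 0 < ε → {x : Γ | ε ≤ ‖f (γ * x) - f x‖}.Finite)
    (Mf : lp (fun _ : Γ => ℂ) 2 →L[ℂ] lp (fun _ : Γ => ℂ) 2)
    (hMf : ∀ (ξ : lp (fun _ : Γ => ℂ) 2) (x : Γ), Mf ξ x = f x * ξ x)
    (uγ : lp (fun _ : Γ => ℂ) 2 →L[ℂ] lp (fun _ : Γ => ℂ) 2)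
    (huγ : ∀ x : Γ, uγ (lp.single 2 x (1 : ℂ)) = lp.single 2 (γ * x) (1 : ℂ)) :
    IsCompactOperator (uγ ∘L Mf - Mf ∘L uγ) := by
  have hk : Tendsto (fun x => f x - f (γ * x)) cofinite (𝓝 0) := by
    refine Metric.tendsto_nhds.2 fun ε hε => eventually_cofinite.2 ?_
    simpa [dist_eq_norm, norm_sub_rev] using hf ε hε
  set k : lp (fun _ : Γ => ℂ) ∞ := ⟨_, memℓp_infty_of_tendsto_cofinite hk⟩
  have huγ_single : ∀ x c, uγ (lp.single 2 x c) = lp.single 2 (γ * x) c := fun x c => by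
    rw [← mul_one c, ← smul_eq_mul, lp.single_smul, map_smul, huγ, lp.single_smul]
  have hcomm : uγ ∘L Mf - Mf ∘L uγ = uγ ∘L lp.mulCLM 2 k := by
    refine lp.ext_single_one ENNReal.ofNat_ne_top fun x => ?_
    simp only [sub_apply, ContinuousLinearMap.comp_apply, huγ, huγ_single,
      lp.apply_single_of_forall_apply_eq_mul hMf,
      lp.apply_single_of_forall_apply_eq_mul (lp.mulCLM_apply k), ← lp.single_sub, ← sub_mul]
    rfl
  rw [hcomm]
  exact (lp.isCompactOperator_mulCLM_of_tendsto_cofinite k hk).clm_comp uγ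

/-- The left-translation analogue of the key step in the proof of the paper's Lemma 21.
Let `Γ` be a group, `γ ∈ Γ`, and let `f : Γ → ℂ` be a bounded function such that
`x ↦ f (γ * x) - f x` tends to `0` along the cofinite filter on `Γ`.  Then the commutator
of the left-translation unitary `u_γ` with the multiplication operator `M_f` is a
compact operator on `ℓ²(Γ)`. -/
theorem commutator_left_translation_mult_compact_of_cofinite
    {Γ : Type*} [Group Γ] [DecidableEq Γ]
    (γ : Γ) (f : Γ → ℂ)
    (hf_bdd : ∃ C : ℝ, ∀ x : Γ, ‖f x‖ ≤ C)
    (hf : ∀ ε : ℝ, 0 < ε → {x : Γ | ε ≤ ‖f (γ * x) - f x‖}.Finite)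
    (Mf : lp (fun _ : Γ => ℂ) 2 →L[ℂ] lp (fun _ : Γ => ℂ) 2)
    (hMf : ∀ (ξ : lp (fun _ : Γ => ℂ) 2) (x : Γ), Mf ξ x = f x * ξ x)
    (uγ : lp (fun _ : Γ => ℂ) 2 →L[ℂ] lp (fun _ : Γ => ℂ) 2)
    (huγ : ∀ x : Γ, uγ (lp.single 2 x (1 : ℂ)) = lp.single 2 (γ * x) (1 : ℂ)) :
    IsCompactOperator (uγ ∘L Mf - Mf ∘L uγ) :=
  commutator_left_translation_mult_compact_of_cofinite_general γ f hf Mf hMf uγ huγ
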